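/- arXiv:1308.3187 — 4 statements merged into one kernel-verified Lean document; each statement's English description precedes it below -/
import Mathlib

section
/- Let E be an exact couple system over a bounded poset I, and let b ≥ p ≥ q ≥ z and b' ≥ p' ≥ q' ≥ z' in I with z = p' and q = b'. Let d : S^{pz}_{bq} → S^{p'z'}_{b'q'} be the homomorphism characterized by: d sends the class of x ∈ ker(d_{pqz}) to the class of j_{p',q'}(i_{z,p'}(y)) for any y ∈ D_z with i_{z,q}(y) = k_{p,q}(x). Since b' = q ≤ p, one has im(d_{b'p'q'}) ⊆ im(d_{p,p',q'}), so there is a natural surjection S^{p'z'}_{b'q'} = ker(d_{p'q'z'})/im(d_{b'p'q'}) → S^{p'z'}_{p,q'} := ker(d_{p'q'z'})/im(d_{p,p',q'}). Then the kernel of this surjection equals im(d); consequently coker(d) is isomorphic to S^{p'z'}_{p,q'}. -/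
open Function

universe u v

/-- An exact couple system over a bounded poset `I`: abelian groups `E^p_q` for `q ≤ p`,
functorial maps `ℓ`, boundary maps `k_{pq} : E^p_q → D_q` (where `D_p := E^p_⊥`), exact
triangles `D_q → D_p → E^p_q → D_q`, and naturality of `k`. -/
structure ExactCoupleSystem (I : Type u) [PartialOrder I] [BoundedOrder I] where
  /-- the abelian groups `E^p_q` -/
  E : ∀ p q : I, q ≤ p → AddCommGrpCat.{v}
  /-- the structure maps `ℓ : E^p_q → E^{p'}_{q'}` for `p ≤ p'`, `q ≤ q'` -/
  l : ∀ {p q p' q' : I} (h : q ≤ p) (h' : q' ≤ p'), p ≤ p' → q ≤ q' →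
      (E p q h →+ E p' q' h')
  /-- the boundary maps `k_{pq} : E^p_q → D_q` -/
  k : ∀ {p q : I} (h : q ≤ p), (E p q h →+ E q ⊥ bot_le)
  l_id : ∀ {p q : I} (h : q ≤ p), l h h le_rfl le_rfl = AddMonoidHom.id _
  l_comp : ∀ {p q p' q' p'' q'' : I} (h : q ≤ p) (h' : q' ≤ p') (h'' : q'' ≤ p'')
      (hp : p ≤ p') (hq : q ≤ q') (hp' : p' ≤ p'') (hq' : q' ≤ q''),
      (l h' h'' hp' hq').comp (l h h' hp hq) = l h h'' (hp.trans hp') (hq.trans hq')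
  exact_ij : ∀ {p q : I} (h : q ≤ p),
      (l (bot_le : (⊥ : I) ≤ q) (bot_le : (⊥ : I) ≤ p) h le_rfl).range =
        (l (bot_le : (⊥ : I) ≤ p) h le_rfl bot_le).ker
  exact_jk : ∀ {p q : I} (h : q ≤ p),
      (l (bot_le : (⊥ : I) ≤ p) h le_rfl bot_le).range = (k h).ker
  exact_ki : ∀ {p q : I} (h : q ≤ p),
      (k h).range = (l (bot_le : (⊥ : I) ≤ q) (bot_le : (⊥ : I) ≤ p) h le_rfl).ker
  k_nat : ∀ {p q p' q' : I} (h : q ≤ p) (h' : q' ≤ p') (hp : p ≤ p') (hq : q ≤ q'),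
      (l (bot_le : (⊥ : I) ≤ q) (bot_le : (⊥ : I) ≤ q') hq le_rfl).comp (k h) =
        (k h').comp (l h h' hp hq)

namespace ExactCoupleSystem

variable {I : Type u} [PartialOrder I] [BoundedOrder I] (X : ExactCoupleSystem.{u, v} I)

/-- `D_p := E^p_{−∞}`. -/
abbrev D (p : I) := X.E p ⊥ bot_le

/-- `i_{qp} : D_q → D_p`. -/
def i {q p : I} (h : q ≤ p) : X.D q →+ X.D p := X.l bot_le bot_le h le_rfl

/-- `j_{pq} : D_p → E^p_q`. -/
def j {q p : I} (h : q ≤ p) : X.D p →+ X.E p q h := X.l bot_le h le_rfl bot_le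

/-- The differential `d_{pqz} = j_{qz} ∘ k_{pq} : E^p_q → E^q_z`. -/
def dd {z q p : I} (hzq : z ≤ q) (hqp : q ≤ p) : X.E p q hqp →+ X.E q z hzq :=
  (X.j hzq).comp (X.k hqp)

/-- The S-term `S^{pz}_{bq} = ker(d_{pqz}) / im(d_{bpq})` of an exact couple system. -/
abbrev Sterm {z q p b : I} (hzq : z ≤ q) (hqp : q ≤ p) (hpb : p ≤ b) :=
  ↥(X.dd hzq hqp).ker ⧸ (X.dd hqp hpb).range.addSubgroupOf (X.dd hzq hqp).ker

/-- The class in `S^{pz}_{bq}` of an element `x ∈ ker(d_{pqz})`. -/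
def Scls {z q p b : I} (hzq : z ≤ q) (hqp : q ≤ p) (hpb : p ≤ b)
    {x : X.E p q hqp} (hx : x ∈ (X.dd hzq hqp).ker) : X.Sterm hzq hqp hpb :=
  QuotientAddGroup.mk ⟨x, hx⟩

end ExactCoupleSystem

/-!
The projection `S^{p'z'}_{qq'} → S^{p'z'}_{pq'}` is induced by the identity of `ker d_{p'q'z'}`,
so its kernel consists of the classes of boundaries `d_{pp'q'} u = j_{p'q'} (k_{pp'} u)`. These are
exactly the values of `d`: if `[x] ↦ [j_{p'q'} y]` with `i_{p'q} y = k_{pq} x`, then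
`i_{p'p} y = i_{qp} (k_{pq} x) = 0`, so `y = k_{pp'} u` by exactness; conversely the boundary of
`u ∈ E^p_{p'}` is the value of `d` at `ℓ u ∈ E^p_q`, by naturality of `k`.
-/

namespace ExactCoupleSystem

variable {I : Type u} [PartialOrder I] [BoundedOrder I] (X : ExactCoupleSystem.{u, v} I)

section Exactness

variable {r q p : I}

@[simp]
lemma i_refl (y : X.D p) : X.i le_rfl y = y := by
  simp [i, X.l_id]

lemma i_i (hrq : r ≤ q) (hqp : q ≤ p) (y : X.D r) :
    X.i hqp (X.i hrq y) = X.i (hrq.trans hqp) y :=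
  DFunLike.congr_fun (X.l_comp bot_le bot_le bot_le hrq le_rfl hqp le_rfl) y

@[simp]
lemma i_k (hqp : q ≤ p) (x : X.E p q hqp) : X.i hqp (X.k hqp x) = 0 := by
  have hx : X.k hqp x ∈ (X.k hqp).range := ⟨x, rfl⟩
  rwa [X.exact_ki hqp] at hx

lemma exists_k_eq_of_i_eq_zero (hqp : q ≤ p) {y : X.D q} (hy : X.i hqp y = 0) :
    ∃ x, X.k hqp x = y := by
  rw [← AddMonoidHom.mem_range, X.exact_ki hqp]
  exact hy

@[simp]
lemma j_i (hqp : q ≤ p) (y : X.D q) : X.j hqp (X.i hqp y) = 0 := by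
  have hy : X.i hqp y ∈ (X.i hqp).range := ⟨y, rfl⟩
  rwa [i, X.exact_ij hqp] at hy

lemma exists_i_eq_of_j_eq_zero (hqp : q ≤ p) {y : X.D p} (hy : X.j hqp y = 0) :
    ∃ y', X.i hqp y' = y := by
  rw [← AddMonoidHom.mem_range, i, X.exact_ij hqp]
  exact hy

@[simp]
lemma k_j (hqp : q ≤ p) (y : X.D p) : X.k hqp (X.j hqp y) = 0 := by
  have hy : X.j hqp y ∈ (X.j hqp).range := ⟨y, rfl⟩
  rwa [j, X.exact_jk hqp] at hy

lemma k_l {p' q' : I} (h : q ≤ p) (h' : q' ≤ p') (hp : p ≤ p') (hq : q ≤ q')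
    (x : X.E p q h) : X.k h' (X.l h h' hp hq x) = X.i hq (X.k h x) :=
  (DFunLike.congr_fun (X.k_nat h h' hp hq) x).symm

end Exactness

section Differential

variable {z q p b : I}

@[simp]
lemma dd_j (hzq : z ≤ q) (hqp : q ≤ p) (y : X.D p) : X.dd hzq hqp (X.j hqp y) = 0 := by
  simp [dd]

lemma dd_l (hzq : z ≤ q) (hqp : q ≤ p) (hpb : p ≤ b) (x : X.E p q hqp) :
    X.dd hzq (hqp.trans hpb) (X.l hqp (hqp.trans hpb) hpb le_rfl x) = X.dd hzq hqp x := by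
  simp [dd, k_l]

lemma range_dd_le_range_dd (hzq : z ≤ q) (hqp : q ≤ p) (hpb : p ≤ b) :
    (X.dd hzq hqp).range ≤ (X.dd hzq (hqp.trans hpb)).range := by
  rintro _ ⟨x, rfl⟩
  exact ⟨_, X.dd_l hzq hqp hpb x⟩

lemma j_mem_range_dd (hzq : z ≤ q) (hqp : q ≤ p) {y : X.D q} (hy : X.i hqp y = 0) :
    X.j hzq y ∈ (X.dd hzq hqp).range := by
  obtain ⟨x, rfl⟩ := X.exists_k_eq_of_i_eq_zero hqp hy
  exact ⟨x, rfl⟩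

end Differential

section Projection

variable {z q p b b' : I} (hzq : z ≤ q) (hqp : q ≤ p) (hpb : p ≤ b) (hbb' : b ≤ b')

def stermProj : X.Sterm hzq hqp hpb →+ X.Sterm hzq hqp (hpb.trans hbb') :=
  QuotientAddGroup.map _ _ (AddMonoidHom.id _) <| by
    rw [AddSubgroup.comap_id]
    exact AddSubgroup.addSubgroupOf_mono _ (X.range_dd_le_range_dd hqp hpb hbb')

lemma stermProj_surjective : Surjective (X.stermProj hzq hqp hpb hbb') :=
  QuotientAddGroup.map_surjective_of_surjective _ _ _ QuotientAddGroup.mk_surjective _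

lemma ker_stermProj :
    (X.stermProj hzq hqp hpb hbb').ker =
      ((X.dd hqp (hpb.trans hbb')).range.addSubgroupOf (X.dd hzq hqp).ker).map
        (QuotientAddGroup.mk' _) := by
  rw [stermProj, QuotientAddGroup.ker_map, AddSubgroup.comap_id]

end Projection

section Cokernel

variable {z' q' p' q p b : I}
  (hz'q' : z' ≤ q') (hq'p' : q' ≤ p') (hp'q : p' ≤ q) (hqp : q ≤ p) (hpb : p ≤ b)

/-- `Dh` is the differential `d : S^{pp'}_{bq} → S^{p'z'}_{qq'}`, `[x] ↦ [j_{p'q'} y]` whenever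
`i_{p'q} y = k_{pq} x`. -/
def IsSDifferential (Dh : X.Sterm hp'q hqp hpb →+ X.Sterm hz'q' hq'p' hp'q) : Prop :=
  ∀ (x : X.E p q hqp) (hx : x ∈ (X.dd hp'q hqp).ker)
    (y : X.D p') (_ : X.i hp'q y = X.k hqp x)
    (hmem : X.j hq'p' (X.i (le_refl p') y) ∈ (X.dd hz'q' hq'p').ker),
    Dh (X.Scls hp'q hqp hpb hx) = X.Scls hz'q' hq'p' hp'q hmem

variable {X hz'q' hq'p' hp'q hqp hpb}
  {Dh : X.Sterm hp'q hqp hpb →+ X.Sterm hz'q' hq'p' hp'q}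

lemma IsSDifferential.range_le (hDh : X.IsSDifferential hz'q' hq'p' hp'q hqp hpb Dh) :
    Dh.range ≤ ((X.dd hq'p' (hp'q.trans hqp)).range.addSubgroupOf
      (X.dd hz'q' hq'p').ker).map (QuotientAddGroup.mk' _) := by
  rintro _ ⟨s, rfl⟩
  induction s using QuotientAddGroup.induction_on with | H s => ?_
  obtain ⟨x, hx⟩ := s
  obtain ⟨y, hy⟩ := X.exists_i_eq_of_j_eq_zero hp'q hx
  have hmem : X.j hq'p' (X.i (le_refl p') y) ∈ (X.dd hz'q' hq'p').ker := by simp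
  -- `i_{p'p} y = i_{qp} (k_{pq} x) = 0`, so `j_{p'q'} y` is a boundary of `d_{p p' q'}`
  have hy0 : X.i (hp'q.trans hqp) y = 0 := by rw [← X.i_i hp'q hqp, hy, i_k]
  refine ⟨⟨_, hmem⟩, ?_, (hDh x hx y hy hmem).symm⟩
  rw [SetLike.mem_coe, AddSubgroup.mem_addSubgroupOf]
  simpa using X.j_mem_range_dd hq'p' _ hy0

lemma IsSDifferential.map_le_range (hDh : X.IsSDifferential hz'q' hq'p' hp'q hqp hpb Dh) :
    ((X.dd hq'p' (hp'q.trans hqp)).range.addSubgroupOf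
      (X.dd hz'q' hq'p').ker).map (QuotientAddGroup.mk' _) ≤ Dh.range := by
  rintro _ ⟨⟨w, hw⟩, ⟨u, hu⟩, rfl⟩
  -- `y := k_{pp'} u` satisfies `i_{p'q} y = k_{pq} (ℓ u)` by naturality of `k`
  set x := X.l (hp'q.trans hqp) hqp le_rfl hp'q u
  have hy : X.i hp'q (X.k _ u) = X.k hqp x := (X.k_l _ _ _ _ u).symm
  have hx : x ∈ (X.dd hp'q hqp).ker := by
    rw [AddMonoidHom.mem_ker, dd, AddMonoidHom.comp_apply, ← hy, j_i]
  have hmem : X.j hq'p' (X.i (le_refl p') (X.k _ u)) ∈ (X.dd hz'q' hq'p').ker := by simp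
  refine ⟨X.Scls hp'q hqp hpb hx, (hDh x hx _ hy hmem).trans ?_⟩
  congr
  rw [i_refl]
  exact hu

end Cokernel

end ExactCoupleSystem

/-- Cokernel of the differential: with `z = p'` and `q = b'`, for the
differential `d : S^{pz}_{bq} → S^{p'z'}_{b'q'}` (characterized as in Statement 11),
one has `im(d_{b'p'q'}) ⊆ im(d_{p,p',q'})`, the natural surjection
`S^{p'z'}_{b'q'} → S^{p'z'}_{p,q'}` has kernel `im(d)`, and hence
`coker(d) ≅ S^{p'z'}_{p,q'}`. -/
theorem statement13 {I : Type u} [PartialOrder I] [BoundedOrder I]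
    (X : ExactCoupleSystem.{u, v} I) {z' q' p' q p b : I}
    (hz'q' : z' ≤ q') (hq'p' : q' ≤ p') (hp'q : p' ≤ q) (hqp : q ≤ p) (hpb : p ≤ b) :
    (X.dd hq'p' hp'q).range ≤ (X.dd hq'p' (hp'q.trans hqp)).range ∧
    ∀ Dh : X.Sterm hp'q hqp hpb →+ X.Sterm hz'q' hq'p' hp'q,
      (∀ (x : X.E p q hqp) (hx : x ∈ (X.dd hp'q hqp).ker)
        (y : X.D p') (_ : X.i hp'q y = X.k hqp x)
        (hmem : X.j hq'p' (X.i (le_refl p') y) ∈ (X.dd hz'q' hq'p').ker),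
        Dh (X.Scls hp'q hqp hpb hx) = X.Scls hz'q' hq'p' hp'q hmem) →
      ∃ π : X.Sterm hz'q' hq'p' hp'q →+ X.Sterm hz'q' hq'p' (hp'q.trans hqp),
        (∀ (x : X.E p' q' hq'p') (hx : x ∈ (X.dd hz'q' hq'p').ker),
          π (X.Scls hz'q' hq'p' hp'q hx) = X.Scls hz'q' hq'p' (hp'q.trans hqp) hx) ∧
        Surjective π ∧ π.ker = Dh.range ∧
        Nonempty ((X.Sterm hz'q' hq'p' hp'q ⧸ Dh.range) ≃+
          X.Sterm hz'q' hq'p' (hp'q.trans hqp)) := by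
  refine ⟨X.range_dd_le_range_dd hq'p' hp'q hqp, fun Dh hDh => ?_⟩
  have hDh' : X.IsSDifferential hz'q' hq'p' hp'q hqp hpb Dh := hDh
  have hsurj := X.stermProj_surjective hz'q' hq'p' hp'q hqp
  have hker : (X.stermProj hz'q' hq'p' hp'q hqp).ker = Dh.range := by
    rw [X.ker_stermProj]
    exact le_antisymm hDh'.map_le_range hDh'.range_le
  refine ⟨X.stermProj hz'q' hq'p' hp'q hqp, fun _ _ => rfl, hsurj, hker, ?_⟩
  exact ⟨(QuotientAddGroup.quotientAddEquivOfEq hker.symm).trans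
    (QuotientAddGroup.quotientKerEquivOfSurjective _ hsurj)⟩
end

section
/- Let E be an exact couple system over a bounded poset I, and for p ∈ I let G_p := im(i_{p,∞} : D_p → D_∞). Then: (a) the numerator ker(d_{p,−∞,−∞}) of S^{p,−∞}_{∞,−∞} is all of D_p, and the map sending the class of u ∈ D_p in S^{p,−∞}_{∞,−∞} to i_{p,∞}(u) is a well-defined isomorphism S^{p,−∞}_{∞,−∞} ≅ G_p; (b) for q ≤ p one has G_q ⊆ G_p, the map G_p → S^{p,−∞}_{∞,q} sending i_{p,∞}(u) to the class of j_{p,q}(u) is a well-defined surjective homomorphism with kernel G_q, and consequently S^{p,−∞}_{∞,q} ≅ G_p/G_q. -/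
open Function

universe u v

/-! The `∞`-page is computed by one diagram chase.  For `⊥ ≤ q ≤ p ≤ b`, the numerator
`ker d_{p,q,⊥} = ker k_{pq}` is `im j_{pq}`, so `u ↦ [j_{pq} u]` maps `D_p` onto `S^{p⊥}_{bq}`;
and `j_{pq} u ∈ im (j_{pq} ∘ k_{bp})` iff `u ∈ im k_{bp} + im i_{qp} = ker i_{pb} + im i_{qp}`,
i.e. iff `i_{pb} u ∈ im i_{qb}`.  Hence the map factors through `G_p = im i_{pb}` with kernel
`G_q`.  The case `q = ⊥` is part (a), because `D_⊥ = 0`. -/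

namespace ExactCoupleSystem

variable {I : Type u} [PartialOrder I] [BoundedOrder I] (X : ExactCoupleSystem.{u, v} I)

lemma range_i_eq_ker_j {q p : I} (hqp : q ≤ p) : (X.i hqp).range = (X.j hqp).ker :=
  X.exact_ij hqp

lemma range_j_eq_ker_k {q p : I} (hqp : q ≤ p) : (X.j hqp).range = (X.k hqp).ker :=
  X.exact_jk hqp

lemma range_k_eq_ker_i {q p : I} (hqp : q ≤ p) : (X.k hqp).range = (X.i hqp).ker :=
  X.exact_ki hqp

lemma j_i_apply {q p : I} (hqp : q ≤ p) (x : X.D q) : X.j hqp (X.i hqp x) = 0 :=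
  (X.range_i_eq_ker_j hqp).le ⟨x, rfl⟩

lemma i_k_apply {q p : I} (hqp : q ≤ p) (x : X.E p q hqp) : X.i hqp (X.k hqp x) = 0 :=
  (X.range_k_eq_ker_i hqp).le ⟨x, rfl⟩

lemma i_i_apply {a b c : I} (hab : a ≤ b) (hbc : b ≤ c) (x : X.D a) :
    X.i hbc (X.i hab x) = X.i (hab.trans hbc) x :=
  DFunLike.congr_fun (X.l_comp bot_le bot_le bot_le hab le_rfl hbc le_rfl) x

lemma j_bot_apply {p : I} (h : (⊥ : I) ≤ p) (x : X.D p) : X.j h x = x :=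
  DFunLike.congr_fun (X.l_id h) x

lemma i_refl_apply (p : I) (x : X.D p) : X.i le_rfl x = x :=
  DFunLike.congr_fun (X.l_id bot_le) x

-- `i_{⊥⊥}` and `j_{⊥⊥}` are both the identity, and `j_{⊥⊥} ∘ i_{⊥⊥} = 0`.
lemma D_bot_eq_zero (x : X.D ⊥) : x = 0 := by
  rw [← X.j_bot_apply le_rfl x, ← X.i_refl_apply ⊥ x, X.j_i_apply]

lemma range_i_bot {b : I} (h : (⊥ : I) ≤ b) : (X.i h).range = ⊥ := by
  rw [AddMonoidHom.range_eq_bot_iff]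
  ext x
  rw [X.D_bot_eq_zero x, map_zero, AddMonoidHom.zero_apply]

lemma dd_bot_apply {q p : I} (h0 : (⊥ : I) ≤ q) (hqp : q ≤ p) (x : X.E p q hqp) :
    X.dd h0 hqp x = X.k hqp x :=
  X.j_bot_apply h0 (X.k hqp x)

lemma ker_dd_bot {q p : I} (h0 : (⊥ : I) ≤ q) (hqp : q ≤ p) :
    (X.dd h0 hqp).ker = (X.j hqp).range := by
  ext x
  rw [X.range_j_eq_ker_k, AddMonoidHom.mem_ker, AddMonoidHom.mem_ker, X.dd_bot_apply]

lemma ker_dd_bot_bot (p : I) : (X.dd (le_refl (⊥ : I)) (bot_le : (⊥ : I) ≤ p)).ker = ⊤ := by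
  rw [X.ker_dd_bot, eq_top_iff]
  exact fun x _ => ⟨x, X.j_bot_apply _ x⟩

lemma j_mem_range_dd_iff {q p b : I} (hqp : q ≤ p) (hpb : p ≤ b) (u : X.D p) :
    X.j hqp u ∈ (X.dd hqp hpb).range ↔ X.i hpb u ∈ (X.i (hqp.trans hpb)).range := by
  constructor
  · rintro ⟨w, hw⟩
    have hj : X.j hqp (u - X.k hpb w) = 0 := by
      rw [map_sub, ← hw, dd, AddMonoidHom.comp_apply, sub_self]
    obtain ⟨v, hv⟩ := (X.range_i_eq_ker_j hqp).ge hj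
    refine ⟨v, ?_⟩
    rw [← X.i_i_apply hqp hpb, hv, map_sub, X.i_k_apply, sub_zero]
  · rintro ⟨v, hv⟩
    have hi : X.i hpb (u - X.i hqp v) = 0 := by
      rw [map_sub, X.i_i_apply, hv, sub_self]
    obtain ⟨w, hw⟩ := (X.range_k_eq_ker_i hpb).ge hi
    refine ⟨w, ?_⟩
    rw [dd, AddMonoidHom.comp_apply, hw, map_sub, X.j_i_apply, sub_zero]

lemma j_mem_ker_dd_bot {q p : I} (h0 : (⊥ : I) ≤ q) (hqp : q ≤ p) (u : X.D p) :
    X.j hqp u ∈ (X.dd h0 hqp).ker := by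
  rw [X.ker_dd_bot]
  exact ⟨u, rfl⟩

def toSterm {q p b : I} (hqp : q ≤ p) (hpb : p ≤ b) :
    X.D p →+ X.Sterm (bot_le : (⊥ : I) ≤ q) hqp hpb :=
  (QuotientAddGroup.mk' _).comp ((X.j hqp).codRestrict _ (X.j_mem_ker_dd_bot bot_le hqp))

lemma toSterm_apply {q p b : I} (hqp : q ≤ p) (hpb : p ≤ b) (u : X.D p)
    (hu : X.j hqp u ∈ (X.dd (bot_le : (⊥ : I) ≤ q) hqp).ker) :
    X.toSterm hqp hpb u = X.Scls bot_le hqp hpb hu :=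
  rfl

lemma toSterm_surjective {q p b : I} (hqp : q ≤ p) (hpb : p ≤ b) :
    Surjective (X.toSterm hqp hpb) := by
  rintro ⟨x, hx⟩
  obtain ⟨u, rfl⟩ := (X.ker_dd_bot bot_le hqp).le hx
  exact ⟨u, rfl⟩

lemma toSterm_eq_zero_iff {q p b : I} (hqp : q ≤ p) (hpb : p ≤ b) (u : X.D p) :
    X.toSterm hqp hpb u = 0 ↔ X.i hpb u ∈ (X.i (hqp.trans hpb)).range := by
  rw [← X.j_mem_range_dd_iff hqp hpb]
  exact (QuotientAddGroup.eq_zero_iff _).trans AddSubgroup.mem_addSubgroupOf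

lemma ker_i_le_ker_toSterm {q p b : I} (hqp : q ≤ p) (hpb : p ≤ b) :
    (X.i hpb).ker ≤ (X.toSterm hqp hpb).ker := fun u hu => by
  rw [AddMonoidHom.mem_ker, X.toSterm_eq_zero_iff, AddMonoidHom.mem_ker.mp hu]
  exact zero_mem _

/-- The map `G_p → S^{p⊥}_{bq}`, `i_{pb} u ↦ [j_{pq} u]`, where `G_p = im i_{pb}`. -/
noncomputable def filtrationToSterm {q p b : I} (hqp : q ≤ p) (hpb : p ≤ b) :
    (X.i hpb).range →+ X.Sterm (bot_le : (⊥ : I) ≤ q) hqp hpb :=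
  (X.i hpb).rangeRestrict.liftOfSurjective (X.i hpb).rangeRestrict_surjective
    ⟨X.toSterm hqp hpb, (X.i hpb).ker_rangeRestrict ▸ X.ker_i_le_ker_toSterm hqp hpb⟩

lemma filtrationToSterm_apply {q p b : I} (hqp : q ≤ p) (hpb : p ≤ b) (u : X.D p) :
    X.filtrationToSterm hqp hpb ⟨X.i hpb u, u, rfl⟩ = X.toSterm hqp hpb u :=
  AddMonoidHom.liftOfRightInverse_comp_apply _ _ _ _ u

lemma filtrationToSterm_surjective {q p b : I} (hqp : q ≤ p) (hpb : p ≤ b) :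
    Surjective (X.filtrationToSterm hqp hpb) := by
  intro s
  obtain ⟨u, rfl⟩ := X.toSterm_surjective hqp hpb s
  exact ⟨_, X.filtrationToSterm_apply hqp hpb u⟩

lemma ker_filtrationToSterm {q p b : I} (hqp : q ≤ p) (hpb : p ≤ b) :
    (X.filtrationToSterm hqp hpb).ker =
      (X.i (hqp.trans hpb)).range.addSubgroupOf (X.i hpb).range := by
  ext ⟨_, u, rfl⟩
  rw [AddMonoidHom.mem_ker, X.filtrationToSterm_apply, X.toSterm_eq_zero_iff,
    AddSubgroup.mem_addSubgroupOf]

lemma range_i_mono {q p b : I} (hqp : q ≤ p) (hpb : p ≤ b) :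
    (X.i (hqp.trans hpb)).range ≤ (X.i hpb).range := by
  rintro _ ⟨v, rfl⟩
  exact ⟨X.i hqp v, X.i_i_apply hqp hpb v⟩

lemma filtrationToSterm_bot_bijective {p b : I} (hpb : p ≤ b) :
    Bijective (X.filtrationToSterm (bot_le : (⊥ : I) ≤ p) hpb) := by
  refine ⟨?_, X.filtrationToSterm_surjective _ _⟩
  rw [← AddMonoidHom.ker_eq_bot_iff, ker_filtrationToSterm, range_i_bot,
    AddSubgroup.bot_addSubgroupOf]

noncomputable def stermEquivFiltrationQuotient {q p b : I} (hqp : q ≤ p) (hpb : p ≤ b) :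
    X.Sterm (bot_le : (⊥ : I) ≤ q) hqp hpb ≃+
      (X.i hpb).range ⧸ (X.i (hqp.trans hpb)).range.addSubgroupOf (X.i hpb).range :=
  (QuotientAddGroup.quotientKerEquivOfSurjective _
    (X.filtrationToSterm_surjective hqp hpb)).symm.trans
    (QuotientAddGroup.quotientAddEquivOfEq (X.ker_filtrationToSterm hqp hpb))

end ExactCoupleSystem

/-- ∞-page as filtration quotients: with `G_p := im(i_{p,∞})`:
(a) the numerator of `S^{p,−∞}_{∞,−∞}` is all of `D_p` and `u ↦ i_{p,∞}(u)` is a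
well-defined isomorphism `S^{p,−∞}_{∞,−∞} ≅ G_p`; (b) for `q ≤ p`, `G_q ⊆ G_p`, and
`i_{p,∞}(u) ↦ class of j_{pq}(u)` is a well-defined surjection `G_p → S^{p,−∞}_{∞,q}`
with kernel `G_q`, so `S^{p,−∞}_{∞,q} ≅ G_p/G_q`. -/
theorem statement14 {I : Type u} [PartialOrder I] [BoundedOrder I]
    (X : ExactCoupleSystem.{u, v} I) {q p : I} (hqp : q ≤ p) :
    ((X.dd (le_refl (⊥ : I)) (bot_le : (⊥ : I) ≤ p)).ker = ⊤) ∧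
    (∃ φ : X.Sterm (le_refl (⊥ : I)) (bot_le : (⊥ : I) ≤ p) le_top →+
        ↥(X.i (le_top : p ≤ ⊤)).range,
      (∀ (u : X.D p) (hu : u ∈ (X.dd (le_refl (⊥ : I)) (bot_le : (⊥ : I) ≤ p)).ker),
        φ (X.Scls (le_refl (⊥ : I)) (bot_le : (⊥ : I) ≤ p) le_top hu) =
          ⟨X.i (le_top : p ≤ ⊤) u, AddMonoidHom.mem_range.mpr ⟨u, rfl⟩⟩) ∧
      Bijective φ) ∧
    (X.i (le_top : q ≤ ⊤)).range ≤ (X.i (le_top : p ≤ ⊤)).range ∧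
    ∃ ψ : ↥(X.i (le_top : p ≤ ⊤)).range →+ X.Sterm (bot_le : (⊥ : I) ≤ q) hqp le_top,
      (∀ (u : X.D p) (hker : X.j hqp u ∈ (X.dd (bot_le : (⊥ : I) ≤ q) hqp).ker),
        ψ ⟨X.i (le_top : p ≤ ⊤) u, AddMonoidHom.mem_range.mpr ⟨u, rfl⟩⟩ =
          X.Scls (bot_le : (⊥ : I) ≤ q) hqp le_top hker) ∧
      Surjective ψ ∧
      ψ.ker = ((X.i (le_top : q ≤ ⊤)).range).addSubgroupOf
        (X.i (le_top : p ≤ ⊤)).range ∧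
      Nonempty (X.Sterm (bot_le : (⊥ : I) ≤ q) hqp le_top ≃+
        (↥(X.i (le_top : p ≤ ⊤)).range ⧸
          ((X.i (le_top : q ≤ ⊤)).range).addSubgroupOf (X.i (le_top : p ≤ ⊤)).range)) := by
  let φ := (AddEquiv.ofBijective _ (X.filtrationToSterm_bot_bijective (le_top : p ≤ ⊤))).symm
  refine ⟨X.ker_dd_bot_bot p, ⟨φ, fun u hu => ?_, φ.bijective⟩, X.range_i_mono hqp le_top,
    X.filtrationToSterm hqp le_top, fun u _ => X.filtrationToSterm_apply hqp le_top u,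
    X.filtrationToSterm_surjective hqp le_top, X.ker_filtrationToSterm hqp le_top,
    ⟨X.stermEquivFiltrationQuotient hqp le_top⟩⟩
  -- `φ` inverts `i_{p⊤} u ↦ [j_{p⊥} u]`, and `j_{p⊥} = id`.
  refine (AddEquiv.symm_apply_eq _).mpr ?_
  rw [AddEquiv.ofBijective_apply, X.filtrationToSterm_apply,
    X.toSterm_apply _ _ _ (X.j_mem_ker_dd_bot bot_le bot_le u)]
  exact congrArg QuotientAddGroup.mk (Subtype.ext (X.j_bot_apply _ u).symm)
end

section
/- Let I be a lattice with least element −∞ and greatest element ∞, and let E be an excisive exact couple system over I. Then for all a, b ∈ I: the map ℓ+ℓ : E^a_{a∧b} ⊕ E^b_{a∧b} → E^{a∨b}_{a∧b} (the sum of the two maps ℓ) and the map (ℓ,ℓ) : E^{a∨b}_{a∧b} → E^{a∨b}_b ⊕ E^{a∨b}_a (the pair of the two maps ℓ) are isomorphisms, and the composite (ℓ,ℓ) ∘ (ℓ+ℓ) equals ℓ⊕ℓ, the direct sum of the excision isomorphisms E^a_{a∧b} → E^{a∨b}_b and E^b_{a∧b} → E^{a∨b}_a. -/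
open Function

universe u v

/-- An exact couple system over a bounded lattice is excisive if all the maps
`ℓ : E^a_{a⊓b} → E^{a⊔b}_b` are isomorphisms. -/
def ExactCoupleSystem.IsExcisive {I : Type u} [Lattice I] [BoundedOrder I]
    (X : ExactCoupleSystem.{u, v} I) : Prop :=
  ∀ a b : I, Function.Bijective
    (X.l (inf_le_left : a ⊓ b ≤ a) (le_sup_right : b ≤ a ⊔ b) le_sup_left inf_le_right)

/-!
The diagonal groups `E^p_p` vanish: `k` kills them since `i_{pp} = id`, and `j_{pp}` is zero
by exactness at `D_p`. Hence `ℓ : E^p_q → E^{p'}_{q'}` vanishes whenever `p ≤ q'`, as it factors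
through `E^p_p`, and a diagram chase through the exact triangles shows that for `q ≤ b ≤ p` the
sequence `E^b_q → E^p_q → E^p_b` is exact. If `ℓ : E^b_q → E^p_a` is injective (which for
`q = a ⊓ b`, `p = a ⊔ b` is excision with `a` and `b` swapped), this exactness makes
`(ℓ, ℓ) : E^p_q → E^p_b × E^p_a` injective. Its composite with `ℓ + ℓ` is the direct sum of the
excision isomorphisms, the cross terms being zero, so both maps are bijective.
-/

namespace ExactCoupleSystem

variable {I : Type u} [PartialOrder I] [BoundedOrder I] (X : ExactCoupleSystem.{u, v} I)

lemma l_l_apply {p q p' q' p'' q'' : I} (h : q ≤ p) (h' : q' ≤ p') (h'' : q'' ≤ p'')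
    (hp : p ≤ p') (hq : q ≤ q') (hp' : p' ≤ p'') (hq' : q' ≤ q'') (x : X.E p q h) :
    X.l h' h'' hp' hq' (X.l h h' hp hq x) = X.l h h'' (hp.trans hp') (hq.trans hq') x := by
  rw [← X.l_comp h h' h'' hp hq hp' hq']
  rfl

lemma bijective_l_congr {p q p' q' p₁ q₁ p₁' q₁' : I} (hp : p = p₁) (hq : q = q₁)
    (hp' : p' = p₁') (hq' : q' = q₁') {h : q ≤ p} {h' : q' ≤ p'} {hpp : p ≤ p'} {hqq : q ≤ q'}
    {h₁ : q₁ ≤ p₁} {h₁' : q₁' ≤ p₁'} {hpp₁ : p₁ ≤ p₁'} {hqq₁ : q₁ ≤ q₁'} :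
    Bijective (X.l h h' hpp hqq) ↔ Bijective (X.l h₁ h₁' hpp₁ hqq₁) := by
  subst hp hq hp' hq'
  rfl

lemma subsingleton_E_self (p : I) : Subsingleton (X.E p p le_rfl) := by
  refine ⟨fun x y => ?_⟩
  suffices ∀ x : X.E p p le_rfl, x = 0 by rw [this x, this y]
  intro x
  have hkx : X.k le_rfl x ∈ (X.l bot_le bot_le (le_refl p) le_rfl).ker := by
    rw [← X.exact_ki]
    exact ⟨x, rfl⟩
  rw [AddMonoidHom.mem_ker, X.l_id] at hkx
  obtain ⟨z, rfl⟩ : x ∈ (X.l bot_le le_rfl (le_refl p) bot_le).range := by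
    rw [X.exact_jk]
    exact hkx
  have hz : z ∈ (X.l bot_le bot_le (le_refl p) le_rfl).range := ⟨z, by rw [X.l_id]; rfl⟩
  rwa [X.exact_ij, AddMonoidHom.mem_ker] at hz

lemma l_eq_zero_of_le {p q p' q' : I} (h : q ≤ p) (h' : q' ≤ p') (hp : p ≤ p') (hq : q ≤ q')
    (hpq' : p ≤ q') : X.l h h' hp hq = 0 := by
  have := X.subsingleton_E_self p
  ext x
  rw [AddMonoidHom.zero_apply, ← X.l_l_apply h le_rfl h' le_rfl h hp hpq',
    Subsingleton.elim (X.l h le_rfl le_rfl h x) 0, map_zero]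

section Square

variable {p q a b : I} (hqa : q ≤ a) (hqb : q ≤ b) (hap : a ≤ p) (hbp : b ≤ p)

lemma l_l_apply_eq_zero (y : X.E b q hqb) :
    X.l (hqb.trans hbp) hbp le_rfl hqb (X.l hqb (hqb.trans hbp) hbp le_rfl y) = 0 := by
  rw [X.l_l_apply, X.l_eq_zero_of_le _ _ _ _ le_rfl, AddMonoidHom.zero_apply]

lemma exists_l_eq_of_l_eq_zero {x : X.E p q (hqb.trans hbp)}
    (hx : X.l (hqb.trans hbp) hbp le_rfl hqb x = 0) :
    ∃ y : X.E b q hqb, X.l hqb (hqb.trans hbp) hbp le_rfl y = x := by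
  have hqp := hqb.trans hbp
  obtain ⟨y, hy⟩ : X.k hqp x ∈ (X.k hqb).range := by
    rw [X.exact_ki, AddMonoidHom.mem_ker, ← AddMonoidHom.comp_apply,
      X.k_nat hqp hbp le_rfl hqb, AddMonoidHom.comp_apply, hx, map_zero]
  obtain ⟨z, hz⟩ : x - X.l hqb hqp hbp le_rfl y ∈ (X.l bot_le hqp le_rfl bot_le).range := by
    rw [X.exact_jk, AddMonoidHom.mem_ker, map_sub, ← AddMonoidHom.comp_apply,
      ← X.k_nat hqb hqp hbp le_rfl, X.l_id, AddMonoidHom.comp_apply, AddMonoidHom.id_apply, hy,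
      sub_self]
  obtain ⟨w, rfl⟩ : z ∈ (X.l bot_le bot_le hbp le_rfl).range := by
    have hjz := congrArg (X.l hqp hbp le_rfl hqb) hz
    rw [map_sub, hx, X.l_l_apply_eq_zero, sub_self, X.l_l_apply] at hjz
    rw [X.exact_ij, AddMonoidHom.mem_ker]
    exact hjz
  refine ⟨y + X.l bot_le hqb le_rfl bot_le w, ?_⟩
  rw [X.l_l_apply] at hz
  rw [map_add, X.l_l_apply, hz, add_sub_cancel]

lemma injective_l_prod_l (hinj : Injective (X.l hqb hap hbp hqa)) :
    Injective ((X.l (hqa.trans hap) hbp le_rfl hqb).prod (X.l (hqa.trans hap) hap le_rfl hqa)) := by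
  refine (injective_iff_map_eq_zero _).mpr fun x hx => ?_
  obtain ⟨y, rfl⟩ := X.exists_l_eq_of_l_eq_zero hqb hbp (congrArg Prod.fst hx)
  have hy : X.l hqb hap hbp hqa y = 0 := by
    rw [← X.l_l_apply]
    exact congrArg Prod.snd hx
  rw [(injective_iff_map_eq_zero _).mp hinj y hy, map_zero]

lemma l_prod_l_comp_l_coprod_l :
    ((X.l (hqa.trans hap) hbp le_rfl hqb).prod (X.l (hqa.trans hap) hap le_rfl hqa)).comp
      ((X.l hqa (hqa.trans hap) hap le_rfl).coprod (X.l hqb (hqa.trans hap) hbp le_rfl)) =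
    (X.l hqa hbp hap hqb).prodMap (X.l hqb hap hbp hqa) := by
  ext ⟨x, y⟩
  · simp [X.l_l_apply_eq_zero hqb hbp, X.l_l_apply]
  · simp [X.l_l_apply_eq_zero hqa hap, X.l_l_apply]

end Square

lemma IsExcisive.bijective_l_swap {I : Type u} [Lattice I] [BoundedOrder I]
    {X : ExactCoupleSystem.{u, v} I} (hX : X.IsExcisive) (a b : I) :
    Bijective (X.l (inf_le_right : a ⊓ b ≤ b) (le_sup_left : a ≤ a ⊔ b) le_sup_right
      inf_le_left) :=
  (X.bijective_l_congr rfl (inf_comm a b) (sup_comm a b) rfl).mpr (hX b a)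

end ExactCoupleSystem

/-- Splitting principle for the 1-page: for an excisive exact couple system
over a bounded lattice, `ℓ+ℓ : E^a_{a⊓b} ⊕ E^b_{a⊓b} → E^{a⊔b}_{a⊓b}` and
`(ℓ,ℓ) : E^{a⊔b}_{a⊓b} → E^{a⊔b}_b ⊕ E^{a⊔b}_a` are isomorphisms, and their composite is
the direct sum of the two excision isomorphisms. -/
theorem statement16 {I : Type u} [Lattice I] [BoundedOrder I]
    (X : ExactCoupleSystem.{u, v} I) (hexc : X.IsExcisive) (a b : I) :
    Bijective
      ((X.l (inf_le_left : a ⊓ b ≤ a) (inf_le_left.trans le_sup_left : a ⊓ b ≤ a ⊔ b)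
          le_sup_left le_rfl).coprod
        (X.l (inf_le_right : a ⊓ b ≤ b) (inf_le_left.trans le_sup_left : a ⊓ b ≤ a ⊔ b)
          le_sup_right le_rfl)) ∧
    Bijective
      ((X.l (inf_le_left.trans le_sup_left : a ⊓ b ≤ a ⊔ b) (le_sup_right : b ≤ a ⊔ b)
          le_rfl inf_le_right).prod
        (X.l (inf_le_left.trans le_sup_left : a ⊓ b ≤ a ⊔ b) (le_sup_left : a ≤ a ⊔ b)
          le_rfl inf_le_left)) ∧
    ((X.l (inf_le_left.trans le_sup_left : a ⊓ b ≤ a ⊔ b) (le_sup_right : b ≤ a ⊔ b)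
          le_rfl inf_le_right).prod
        (X.l (inf_le_left.trans le_sup_left : a ⊓ b ≤ a ⊔ b) (le_sup_left : a ≤ a ⊔ b)
          le_rfl inf_le_left)).comp
      ((X.l (inf_le_left : a ⊓ b ≤ a) (inf_le_left.trans le_sup_left : a ⊓ b ≤ a ⊔ b)
          le_sup_left le_rfl).coprod
        (X.l (inf_le_right : a ⊓ b ≤ b) (inf_le_left.trans le_sup_left : a ⊓ b ≤ a ⊔ b)
          le_sup_right le_rfl)) =
      AddMonoidHom.prodMap
        (X.l (inf_le_left : a ⊓ b ≤ a) (le_sup_right : b ≤ a ⊔ b) le_sup_left inf_le_right)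
        (X.l (inf_le_right : a ⊓ b ≤ b) (le_sup_left : a ≤ a ⊔ b) le_sup_right
          inf_le_left) := by
  have hcomp := X.l_prod_l_comp_l_coprod_l (inf_le_left : a ⊓ b ≤ a) (inf_le_right : a ⊓ b ≤ b)
    (le_sup_left : a ≤ a ⊔ b) (le_sup_right : b ≤ a ⊔ b)
  have hswap := hexc.bijective_l_swap a b
  have hinj := X.injective_l_prod_l (inf_le_left : a ⊓ b ≤ a) (inf_le_right : a ⊓ b ≤ b)
    (le_sup_left : a ≤ a ⊔ b) (le_sup_right : b ≤ a ⊔ b) hswap.injective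
  have hbij := (hexc a b).prodMap hswap
  rw [← AddMonoidHom.coe_prodMap, ← hcomp, AddMonoidHom.coe_comp] at hbij
  have hprod : Bijective _ := ⟨hinj, hbij.surjective.of_comp⟩
  exact ⟨(hprod.of_comp_iff' _).mp hbij, hprod, hcomp⟩
end

section
/- Let I be a closed set system (a family of subsets of a fixed set closed under arbitrary unions and intersections, ordered by inclusion, with least element ⋂I and greatest element ⋃I) and let E be an excisive exact couple system over I. Let z ⊆ q ⊆ p ⊆ b and z' ⊆ q' ⊆ p' ⊆ b' be quadruples in I with b∖p = b'∖p', p∖q = p'∖q', and q∖z = q'∖z'. Set b'' := b∪b', p'' := p∪p', q'' := q∪q', z'' := z∪z' (then z'' ⊆ q'' ⊆ p'' ⊆ b''). Then the ℓ-induced maps S^{pz}_{bq} → S^{p''z''}_{b''q''} and S^{p'z'}_{b'q'} → S^{p''z''}_{b''q''} are isomorphisms; in particular S^{pz}_{bq} ≅ S^{p'z'}_{b'q'}. -/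
open Function

universe u v

/-- A closed set system: a family of subsets of `α` closed under arbitrary unions and
intersections, regarded as a type (the elements of the family), ordered by inclusion. -/
def CSS {α : Type*} (S : Set (Set α)) (_ : ∀ T ⊆ S, ⋃₀ T ∈ S) (_ : ∀ T ⊆ S, ⋂₀ T ∈ S) :
    Type _ := ↥S

namespace CSS

variable {α : Type*} {S : Set (Set α)} {hU : ∀ T ⊆ S, ⋃₀ T ∈ S} {hI : ∀ T ⊆ S, ⋂₀ T ∈ S}

/-- The underlying set of a member of a closed set system. -/
def toSet (a : CSS S hU hI) : Set α := Subtype.val a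

lemma union_mem (a b : CSS S hU hI) : a.toSet ∪ b.toSet ∈ S := by
  have h : a.toSet ∪ b.toSet = ⋃₀ {a.toSet, b.toSet} := by
    simp [Set.sUnion_pair]
  rw [h]
  refine hU _ ?_
  rintro t (rfl | rfl)
  · exact a.2
  · exact b.2

lemma inter_mem (a b : CSS S hU hI) : a.toSet ∩ b.toSet ∈ S := by
  have h : a.toSet ∩ b.toSet = ⋂₀ {a.toSet, b.toSet} := by
    simp [Set.sInter_pair]
  rw [h]
  refine hI _ ?_
  rintro t (rfl | rfl)
  · exact a.2
  · exact b.2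

instance : Lattice (CSS S hU hI) where
  le a b := a.toSet ⊆ b.toSet
  le_refl a := subset_rfl
  le_trans a b c hab hbc := show a.toSet ⊆ c.toSet from Set.Subset.trans hab hbc
  le_antisymm a b hab hba := Subtype.ext (subset_antisymm hab hba)
  sup a b := ⟨a.toSet ∪ b.toSet, union_mem a b⟩
  le_sup_left a b := Set.subset_union_left
  le_sup_right a b := Set.subset_union_right
  sup_le a b c hac hbc := Set.union_subset hac hbc
  inf a b := ⟨a.toSet ∩ b.toSet, inter_mem a b⟩
  inf_le_left a b := Set.inter_subset_left
  inf_le_right a b := Set.inter_subset_right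
  le_inf a b c hab hac := Set.subset_inter hab hac

instance : BoundedOrder (CSS S hU hI) where
  top := ⟨Set.univ, by simpa using hI ∅ (Set.empty_subset S)⟩
  le_top a := show a.toSet ⊆ Set.univ from Set.subset_univ _
  bot := ⟨∅, by simpa using hU ∅ (Set.empty_subset S)⟩
  bot_le a := show ∅ ⊆ a.toSet from Set.empty_subset _

end CSS

/-!
Each of the two maps is induced on `ker d / im d` by three `ℓ`-maps,
`E^b_p → E^{b''}_{p''}`, `E^p_q → E^{p''}_{q''}` and `E^q_z → E^{q''}_{z''}`, which commute with
the differentials. For sets, `p ∖ q = p' ∖ q'` gives `p ∩ (q ∪ q') = q` and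
`p ∪ (q ∪ q') = p ∪ p'`, so excision makes all three `ℓ`-maps isomorphisms, and a map of
subquotients induced by isomorphisms is an isomorphism.
-/

section Subquotient

variable {A B C A' B' C' : Type*} [AddCommGroup A] [AddCommGroup B] [AddCommGroup C]
  [AddCommGroup A'] [AddCommGroup B'] [AddCommGroup C']
  {d : A →+ B} {e : C →+ A} {d' : A' →+ B'} {e' : C' →+ A'}
  {lA : A →+ A'} {lB : B →+ B'} {lC : C →+ C'}

def subquotientMap (hd : lB.comp d = d'.comp lA) (he : lA.comp e = e'.comp lC) :
    (↥d.ker ⧸ e.range.addSubgroupOf d.ker) →+ (↥d'.ker ⧸ e'.range.addSubgroupOf d'.ker) :=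
  QuotientAddGroup.map _ _
    ((lA.comp d.ker.subtype).codRestrict d'.ker fun x => by
      rw [AddMonoidHom.mem_ker, AddMonoidHom.comp_apply, AddSubgroup.coe_subtype,
        ← AddMonoidHom.comp_apply, ← hd, AddMonoidHom.comp_apply, x.2, map_zero])
    (by
      rintro x ⟨c, hc⟩
      refine ⟨lC c, ?_⟩
      simp only [AddMonoidHom.codRestrict_apply, AddMonoidHom.comp_apply,
        AddSubgroup.coe_subtype, ← hc]
      exact (DFunLike.congr_fun he c).symm)

lemma subquotientMap_mk (hd : lB.comp d = d'.comp lA) (he : lA.comp e = e'.comp lC)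
    {x : A} (hx : x ∈ d.ker) (hx' : lA x ∈ d'.ker) :
    subquotientMap hd he (QuotientAddGroup.mk ⟨x, hx⟩) = QuotientAddGroup.mk ⟨lA x, hx'⟩ :=
  rfl

lemma subquotientMap_injective (hd : lB.comp d = d'.comp lA) (he : lA.comp e = e'.comp lC)
    (hlA : Function.Injective lA) (hlC : Function.Surjective lC) :
    Function.Injective (subquotientMap hd he) := by
  rw [injective_iff_map_eq_zero]
  intro s
  induction s using QuotientAddGroup.induction_on with
  | H x =>
    rw [subquotientMap, QuotientAddGroup.map_mk, QuotientAddGroup.eq_zero_iff,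
      AddSubgroup.mem_addSubgroupOf, QuotientAddGroup.eq_zero_iff,
      AddSubgroup.mem_addSubgroupOf]
    rintro ⟨c', hc'⟩
    obtain ⟨c, rfl⟩ := hlC c'
    exact ⟨c, hlA ((DFunLike.congr_fun he c).trans hc')⟩

lemma subquotientMap_surjective (hd : lB.comp d = d'.comp lA) (he : lA.comp e = e'.comp lC)
    (hlA : Function.Surjective lA) (hlB : Function.Injective lB) :
    Function.Surjective (subquotientMap hd he) := by
  intro s
  induction s using QuotientAddGroup.induction_on with
  | H y =>
    obtain ⟨x, hx⟩ := hlA y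
    have hxd : x ∈ d.ker := hlB <| by
      rw [← AddMonoidHom.comp_apply, hd, AddMonoidHom.comp_apply, hx, map_zero]
      exact y.2
    exact ⟨QuotientAddGroup.mk ⟨x, hxd⟩, congrArg QuotientAddGroup.mk (Subtype.ext hx)⟩

end Subquotient

lemma Set.union_sdiff_union_of_sdiff_eq {α : Type*} {P Q P' Q' : Set α}
    (h : P \ Q = P' \ Q') : (P ∪ P') \ (Q ∪ Q') = P \ Q := by
  ext x
  have hx := Set.ext_iff.mp h x
  simp only [Set.mem_sdiff, Set.mem_union] at hx ⊢
  tauto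

namespace ExactCoupleSystem

section Naturality

variable {I : Type u} [PartialOrder I] [BoundedOrder I] (X : ExactCoupleSystem.{u, v} I)

lemma l_comp_dd {z q p z' q' p' : I} (hzq : z ≤ q) (hqp : q ≤ p) (hzq' : z' ≤ q')
    (hqp' : q' ≤ p') (hz : z ≤ z') (hq : q ≤ q') (hp : p ≤ p') :
    (X.l hzq hzq' hq hz).comp (X.dd hzq hqp) = (X.dd hzq' hqp').comp (X.l hqp hqp' hp hq) := by
  unfold dd j
  rw [← AddMonoidHom.comp_assoc, X.l_comp, AddMonoidHom.comp_assoc, ← X.k_nat hqp hqp' hp hq,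
    ← AddMonoidHom.comp_assoc, X.l_comp]

def Smap {z q p b z' q' p' b' : I} (hzq : z ≤ q) (hqp : q ≤ p) (hpb : p ≤ b)
    (hzq' : z' ≤ q') (hqp' : q' ≤ p') (hpb' : p' ≤ b')
    (hz : z ≤ z') (hq : q ≤ q') (hp : p ≤ p') (hb : b ≤ b') :
    X.Sterm hzq hqp hpb →+ X.Sterm hzq' hqp' hpb' :=
  subquotientMap (X.l_comp_dd hzq hqp hzq' hqp' hz hq hp)
    (X.l_comp_dd hqp hpb hqp' hpb' hq hp hb)

lemma Smap_bijective {z q p b z' q' p' b' : I} (hzq : z ≤ q) (hqp : q ≤ p) (hpb : p ≤ b)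
    (hzq' : z' ≤ q') (hqp' : q' ≤ p') (hpb' : p' ≤ b')
    (hz : z ≤ z') (hq : q ≤ q') (hp : p ≤ p') (hb : b ≤ b')
    (hlpq : Function.Bijective (X.l hqp hqp' hp hq))
    (hlqz : Function.Injective (X.l hzq hzq' hq hz))
    (hlbp : Function.Surjective (X.l hpb hpb' hb hp)) :
    Function.Bijective (X.Smap hzq hqp hpb hzq' hqp' hpb' hz hq hp hb) :=
  ⟨subquotientMap_injective _ _ hlpq.1 hlbp, subquotientMap_surjective _ _ hlpq.2 hlqz⟩

end Naturality

section ClosedSetSystem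

variable {α : Type u} {S : Set (Set α)} {hU : ∀ T ⊆ S, ⋃₀ T ∈ S} {hI : ∀ T ⊆ S, ⋂₀ T ∈ S}
  {X : ExactCoupleSystem.{u, v} (CSS S hU hI)}

lemma IsExcisive.l_bijective_of_sdiff_eq (hexc : X.IsExcisive) {q p q'' p'' : CSS S hU hI}
    (hqp : q ≤ p) (hqp'' : q'' ≤ p'') (hp : p ≤ p'') (hq : q ≤ q'')
    (hdiff : p.toSet \ q.toSet = p''.toSet \ q''.toSet) :
    Function.Bijective (X.l hqp hqp'' hp hq) := by
  have hmem := fun x => Set.ext_iff.mp hdiff x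
  obtain rfl : q = p ⊓ q'' := Subtype.ext <| Set.ext fun x => by
    have := hmem x; have := @hqp x; have := @hq x
    change _ ↔ _ ∈ p.toSet ∩ q''.toSet
    simp only [Set.mem_sdiff, Set.mem_inter_iff] at *
    tauto
  obtain rfl : p'' = p ⊔ q'' := Subtype.ext <| Set.ext fun x => by
    have := hmem x; have := @hp x; have := @hqp'' x
    change _ ↔ _ ∈ p.toSet ∪ q''.toSet
    simp only [Set.mem_sdiff, Set.mem_union] at *
    tauto
  exact hexc p q''

lemma IsExcisive.l_sup_bijective (hexc : X.IsExcisive) {q p q' p' : CSS S hU hI}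
    (hqp : q ≤ p) (hqp' : q' ≤ p') (hdiff : p.toSet \ q.toSet = p'.toSet \ q'.toSet) :
    Function.Bijective (X.l hqp (sup_le_sup hqp hqp') le_sup_left le_sup_left) ∧
      Function.Bijective (X.l hqp' (sup_le_sup hqp hqp') le_sup_right le_sup_right) := by
  have hsup : (p ⊔ p').toSet \ (q ⊔ q').toSet = p.toSet \ q.toSet :=
    Set.union_sdiff_union_of_sdiff_eq hdiff
  exact ⟨hexc.l_bijective_of_sdiff_eq _ _ _ _ hsup.symm,
    hexc.l_bijective_of_sdiff_eq _ _ _ _ (hsup.trans hdiff).symm⟩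

end ClosedSetSystem

end ExactCoupleSystem

/-- Natural isomorphisms 1: for an excisive exact couple system over a
closed set system, two quadruples `z ⊆ q ⊆ p ⊆ b` and `z' ⊆ q' ⊆ p' ⊆ b'` with
`b∖p = b'∖p'`, `p∖q = p'∖q'`, `q∖z = q'∖z'` have, with `p'' := p ∪ p'` etc., `ℓ`-induced
isomorphisms `S^{pz}_{bq} → S^{p''z''}_{b''q''} ← S^{p'z'}_{b'q'}`; in particular
`S^{pz}_{bq} ≅ S^{p'z'}_{b'q'}`. -/
theorem statement18 {α : Type u} {S : Set (Set α)} {hU : ∀ T ⊆ S, ⋃₀ T ∈ S}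
    {hI : ∀ T ⊆ S, ⋂₀ T ∈ S} (X : ExactCoupleSystem.{u, v} (CSS S hU hI))
    (hexc : X.IsExcisive) {z q p b z' q' p' b' : CSS S hU hI}
    (hzq : z ≤ q) (hqp : q ≤ p) (hpb : p ≤ b)
    (hzq' : z' ≤ q') (hqp' : q' ≤ p') (hpb' : p' ≤ b')
    (hbp : b.toSet \ p.toSet = b'.toSet \ p'.toSet)
    (hpq : p.toSet \ q.toSet = p'.toSet \ q'.toSet)
    (hqz : q.toSet \ z.toSet = q'.toSet \ z'.toSet) :
    ∃ (f : X.Sterm hzq hqp hpb →+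
        X.Sterm (sup_le_sup hzq hzq') (sup_le_sup hqp hqp') (sup_le_sup hpb hpb'))
      (f' : X.Sterm hzq' hqp' hpb' →+
        X.Sterm (sup_le_sup hzq hzq') (sup_le_sup hqp hqp') (sup_le_sup hpb hpb')),
      (∀ (u : X.E p q hqp) (hu : u ∈ (X.dd hzq hqp).ker)
        (hu' : X.l hqp (sup_le_sup hqp hqp') le_sup_left le_sup_left u ∈
          (X.dd (sup_le_sup hzq hzq') (sup_le_sup hqp hqp')).ker),
        f (X.Scls hzq hqp hpb hu) =
          X.Scls (sup_le_sup hzq hzq') (sup_le_sup hqp hqp') (sup_le_sup hpb hpb') hu') ∧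
      (∀ (u : X.E p' q' hqp') (hu : u ∈ (X.dd hzq' hqp').ker)
        (hu' : X.l hqp' (sup_le_sup hqp hqp') le_sup_right le_sup_right u ∈
          (X.dd (sup_le_sup hzq hzq') (sup_le_sup hqp hqp')).ker),
        f' (X.Scls hzq' hqp' hpb' hu) =
          X.Scls (sup_le_sup hzq hzq') (sup_le_sup hqp hqp') (sup_le_sup hpb hpb') hu') ∧
      Bijective f ∧ Bijective f' ∧
      Nonempty (X.Sterm hzq hqp hpb ≃+ X.Sterm hzq' hqp' hpb') := by
  obtain ⟨hpq_l, hpq_r⟩ := hexc.l_sup_bijective hqp hqp' hpq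
  obtain ⟨hqz_l, hqz_r⟩ := hexc.l_sup_bijective hzq hzq' hqz
  obtain ⟨hbp_l, hbp_r⟩ := hexc.l_sup_bijective hpb hpb' hbp
  have hf := X.Smap_bijective hzq hqp hpb (sup_le_sup hzq hzq') (sup_le_sup hqp hqp')
    (sup_le_sup hpb hpb') le_sup_left le_sup_left le_sup_left le_sup_left
    hpq_l hqz_l.1 hbp_l.2
  have hf' := X.Smap_bijective hzq' hqp' hpb' (sup_le_sup hzq hzq') (sup_le_sup hqp hqp')
    (sup_le_sup hpb hpb') le_sup_right le_sup_right le_sup_right le_sup_right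
    hpq_r hqz_r.1 hbp_r.2
  exact ⟨_, _, fun _ hu hu' => subquotientMap_mk _ _ hu hu',
    fun _ hu hu' => subquotientMap_mk _ _ hu hu', hf, hf',
    ⟨(AddEquiv.ofBijective _ hf).trans (AddEquiv.ofBijective _ hf').symm⟩⟩
end
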